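/- arXiv:1705.01708 — 2 statements merged into one kernel-verified Lean document; each statement's English description precedes it below -/
import Mathlib

section
/- (PU-AUC risk identity) Under the marginal decomposition p = θ_P·p_P + θ_N·p_N with θ_N > 0, the PN-AUC risk R_PN(f) = E_{x~p_P} E_{x'~p_N}[ℓ(f(x,x'))] equals (1/θ_N)·E_{x~p_P} E_{x'~p}[ℓ(f(x,x'))] − (θ_P/θ_N)·E_{x~p_P} E_{x'~p_P}[ℓ(f(x,x'))]. -/
/-! Integration against the mixture `p = θP • pP + θN • pN` in the inner variable is linear in the
mixture weights, so `E_{pP} E_p ℓ∘f = θP · E_{pP} E_{pP} ℓ∘f + θN · E_{pP} E_{pN} ℓ∘f`; solving for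
the last term gives the identity. Boundedness of `ℓ` makes every integral involved finite. -/

open MeasureTheory

section Mixture

variable {α β E : Type*} [MeasurableSpace α] [MeasurableSpace β]
  [NormedAddCommGroup E] [NormedSpace ℝ E]

theorem integral_ofReal_smul_add_ofReal_smul_measure {g : β → E} {ν₁ ν₂ : Measure β}
    {a b : ℝ} (ha : 0 ≤ a) (hb : 0 ≤ b) (h₁ : Integrable g ν₁) (h₂ : Integrable g ν₂) :
    ∫ y, g y ∂(ENNReal.ofReal a • ν₁ + ENNReal.ofReal b • ν₂)
      = a • ∫ y, g y ∂ν₁ + b • ∫ y, g y ∂ν₂ := by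
  rw [integral_add_measure (h₁.smul_measure ENNReal.ofReal_ne_top)
      (h₂.smul_measure ENNReal.ofReal_ne_top),
    integral_smul_measure, integral_smul_measure,
    ENNReal.toReal_ofReal ha, ENNReal.toReal_ofReal hb]

theorem integrable_integral_of_norm_le {g : α → β → E}
    (hg : StronglyMeasurable (Function.uncurry g)) {C : ℝ} (hC : ∀ x y, ‖g x y‖ ≤ C)
    (μ : Measure α) [IsFiniteMeasure μ]
    (ν : Measure β) [IsFiniteMeasure ν] :
    Integrable (fun x => ∫ y, g x y ∂ν) μ :=
  Integrable.of_bound hg.integral_prod_right'.aestronglyMeasurable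
    (C * ν.real Set.univ)
    (ae_of_all _ fun _ => norm_integral_le_of_norm_le_const (ae_of_all _ fun _ => hC _ _))

theorem integral_integral_ofReal_smul_add_ofReal_smul_measure [CompleteSpace E]
    {g : α → β → E}
    (hg : StronglyMeasurable (Function.uncurry g)) {C : ℝ} (hC : ∀ x y, ‖g x y‖ ≤ C)
    (μ : Measure α) [IsFiniteMeasure μ] (ν₁ ν₂ : Measure β) [IsFiniteMeasure ν₁]
    [IsFiniteMeasure ν₂] {a b : ℝ} (ha : 0 ≤ a) (hb : 0 ≤ b) :
    ∫ x, ∫ y, g x y ∂(ENNReal.ofReal a • ν₁ + ENNReal.ofReal b • ν₂) ∂μ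
      = a • ∫ x, ∫ y, g x y ∂ν₁ ∂μ + b • ∫ x, ∫ y, g x y ∂ν₂ ∂μ := by
  have hsection : ∀ x (ν : Measure β) [IsFiniteMeasure ν], Integrable (g x) ν := fun x ν _ =>
    Integrable.of_bound (hg.comp_measurable measurable_prodMk_left).aestronglyMeasurable C
      (ae_of_all _ (hC x))
  simp only [integral_ofReal_smul_add_ofReal_smul_measure ha hb (hsection _ ν₁) (hsection _ ν₂)]
  rw [← integral_smul, ← integral_smul]
  exact integral_add ((integrable_integral_of_norm_le hg hC μ ν₁).smul a)
    ((integrable_integral_of_norm_le hg hC μ ν₂).smul b)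

end Mixture

theorem pu_auc_risk_identity_general
    {d : ℕ} (pP pN : Measure (Fin d → ℝ))
    [IsProbabilityMeasure pP] [IsProbabilityMeasure pN]
    (θP θN : ℝ) (hθP : θP ∈ Set.Ioo (0:ℝ) 1) (hθN : θN ∈ Set.Ioo (0:ℝ) 1)
    (p : Measure (Fin d → ℝ))
    (hp : p = (ENNReal.ofReal θP) • pP + (ENNReal.ofReal θN) • pN)
    (ℓ : ℝ → ℝ) (hℓm : Measurable ℓ) (C : ℝ) (hℓb : ∀ m, |ℓ m| ≤ C)
    (f : (Fin d → ℝ) → (Fin d → ℝ) → ℝ)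
    (hf : Measurable (fun q : (Fin d → ℝ) × (Fin d → ℝ) => f q.1 q.2)) :
    ∫ x, ∫ x', ℓ (f x x') ∂pN ∂pP
      = (1 / θN) * ∫ x, ∫ x', ℓ (f x x') ∂p ∂pP
        - (θP / θN) * ∫ x, ∫ x', ℓ (f x x') ∂pP ∂pP := by
  have hmixture := integral_integral_ofReal_smul_add_ofReal_smul_measure
    (g := fun x x' => ℓ (f x x')) (hℓm.comp hf).stronglyMeasurable (fun _ _ => hℓb _)
    pP pP pN hθP.1.le hθN.1.le
  rw [hp, hmixture, smul_eq_mul, smul_eq_mul]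
  field_simp [hθN.1.ne']
  ring

/-- PU-AUC risk identity: the PN-AUC risk can be expressed using only the
positive and unlabeled (marginal) distributions. -/
theorem pu_auc_risk_identity
    {d : ℕ} (pP pN : Measure (Fin d → ℝ))
    [IsProbabilityMeasure pP] [IsProbabilityMeasure pN]
    (θP θN : ℝ) (hθP : θP ∈ Set.Ioo (0:ℝ) 1) (hθN : θN ∈ Set.Ioo (0:ℝ) 1)
    (hsum : θP + θN = 1)
    (p : Measure (Fin d → ℝ))
    (hp : p = (ENNReal.ofReal θP) • pP + (ENNReal.ofReal θN) • pN)
    (ℓ : ℝ → ℝ) (hℓm : Measurable ℓ) (C : ℝ) (hℓb : ∀ m, |ℓ m| ≤ C)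
    (f : (Fin d → ℝ) → (Fin d → ℝ) → ℝ)
    (hf : Measurable (fun q : (Fin d → ℝ) × (Fin d → ℝ) => f q.1 q.2)) :
    ∫ x, ∫ x', ℓ (f x x') ∂pN ∂pP
      = (1 / θN) * ∫ x, ∫ x', ℓ (f x x') ∂p ∂pP
        - (θP / θN) * ∫ x, ∫ x', ℓ (f x x') ∂pP ∂pP :=
  pu_auc_risk_identity_general pP pN θP θN hθP hθN p hp ℓ hℓm C hℓb f hf
end

section
/- (NU-AUC risk identity) Under the marginal decomposition p = θ_P·p_P + θ_N·p_N with θ_P > 0, the PN-AUC risk R_PN(f) = E_{x~p_P} E_{x'~p_N}[ℓ(f(x,x'))] equals (1/θ_P)·E_{x~p} E_{x'~p_N}[ℓ(f(x,x'))] − (θ_N/θ_P)·E_{x~p_N} E_{x'~p_N}[ℓ(f(x,x'))]. -/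
open MeasureTheory

section

variable {α β : Type*} [MeasurableSpace α] [MeasurableSpace β]

lemma integrable_integral_prod_right_of_norm_le (μ : Measure α) [IsFiniteMeasure μ]
    (ν : Measure β) [IsFiniteMeasure ν] {F : α × β → ℝ} (hF : StronglyMeasurable F) {C : ℝ}
    (hC : ∀ q, ‖F q‖ ≤ C) :
    Integrable (fun x => ∫ y, F (x, y) ∂ν) μ :=
  Integrable.of_bound hF.integral_prod_right'.aestronglyMeasurable (C * ν.real Set.univ)
    (ae_of_all _ fun x => norm_integral_le_of_norm_le_const (ae_of_all _ fun y => hC (x, y)))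

lemma integral_ofReal_smul_add_ofReal_smul_measure_s2 {E : Type*} [NormedAddCommGroup E]
    [NormedSpace ℝ E] {μ ν : Measure α} {g : α → E} (hμ : Integrable g μ) (hν : Integrable g ν)
    {a b : ℝ} (ha : 0 ≤ a) (hb : 0 ≤ b) :
    ∫ x, g x ∂(ENNReal.ofReal a • μ + ENNReal.ofReal b • ν)
      = a • ∫ x, g x ∂μ + b • ∫ x, g x ∂ν := by
  rw [integral_add_measure (hμ.smul_measure ENNReal.ofReal_ne_top)
      (hν.smul_measure ENNReal.ofReal_ne_top),
    integral_smul_measure, integral_smul_measure, ENNReal.toReal_ofReal ha,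
    ENNReal.toReal_ofReal hb]

end

theorem nu_auc_risk_identity_general
    {d : ℕ} (pP pN : Measure (Fin d → ℝ))
    [IsProbabilityMeasure pP] [IsProbabilityMeasure pN]
    (θP θN : ℝ) (hθP : θP ∈ Set.Ioo (0:ℝ) 1) (hθN : θN ∈ Set.Ioo (0:ℝ) 1)
    (p : Measure (Fin d → ℝ))
    (hp : p = (ENNReal.ofReal θP) • pP + (ENNReal.ofReal θN) • pN)
    (ℓ : ℝ → ℝ) (hℓm : Measurable ℓ) (C : ℝ) (hℓb : ∀ m, |ℓ m| ≤ C)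
    (f : (Fin d → ℝ) → (Fin d → ℝ) → ℝ)
    (hf : Measurable (fun q : (Fin d → ℝ) × (Fin d → ℝ) => f q.1 q.2)) :
    ∫ x, ∫ x', ℓ (f x x') ∂pN ∂pP
      = (1 / θP) * ∫ x, ∫ x', ℓ (f x x') ∂pN ∂p
        - (θN / θP) * ∫ x, ∫ x', ℓ (f x x') ∂pN ∂pN := by
  have hint : ∀ μ : Measure (Fin d → ℝ), [IsFiniteMeasure μ] →
      Integrable (fun x => ∫ x', ℓ (f x x') ∂pN) μ := fun μ _ =>
    integrable_integral_prod_right_of_norm_le μ pN (F := fun q => ℓ (f q.1 q.2))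
      (hℓm.comp hf).stronglyMeasurable fun q => hℓb _
  rw [hp, integral_ofReal_smul_add_ofReal_smul_measure_s2 (hint pP) (hint pN) hθP.1.le hθN.1.le,
    smul_eq_mul, smul_eq_mul]
  field_simp [hθP.1.ne']
  ring

/-- NU-AUC risk identity: the PN-AUC risk can be expressed using only the
negative and unlabeled (marginal) distributions. -/
theorem nu_auc_risk_identity
    {d : ℕ} (pP pN : Measure (Fin d → ℝ))
    [IsProbabilityMeasure pP] [IsProbabilityMeasure pN]
    (θP θN : ℝ) (hθP : θP ∈ Set.Ioo (0:ℝ) 1) (hθN : θN ∈ Set.Ioo (0:ℝ) 1)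
    (hsum : θP + θN = 1)
    (p : Measure (Fin d → ℝ))
    (hp : p = (ENNReal.ofReal θP) • pP + (ENNReal.ofReal θN) • pN)
    (ℓ : ℝ → ℝ) (hℓm : Measurable ℓ) (C : ℝ) (hℓb : ∀ m, |ℓ m| ≤ C)
    (f : (Fin d → ℝ) → (Fin d → ℝ) → ℝ)
    (hf : Measurable (fun q : (Fin d → ℝ) × (Fin d → ℝ) => f q.1 q.2)) :
    ∫ x, ∫ x', ℓ (f x x') ∂pN ∂pP
      = (1 / θP) * ∫ x, ∫ x', ℓ (f x x') ∂pN ∂p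
        - (θN / θP) * ∫ x, ∫ x', ℓ (f x x') ∂pN ∂pN :=
  nu_auc_risk_identity_general pP pN θP θN hθP hθN p hp ℓ hℓm C hℓb f hf
end
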